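/- arXiv:1806.04490 — 2 statements merged into one kernel-verified Lean document; each statement's English description precedes it below -/
import Mathlib

section
/- Let f ∈ C_0(D) (i.e., ⟨π,f⟩ = 0). Then for any δ > 0 and any norm ‖·‖ on ℝ^D, there exists C_δ < ∞ such that for all t ≥ 0 and all x ∈ D, |exp(t(P^π_D − I)) f (x)| ≤ C_δ e^{−t(λ+γ−δ)} ‖f‖, where γ is the spectral gap of P_D. -/
open Matrix BigOperators

/-- `σ` is a (complex) eigenvalue of the matrix `M`. -/
def IsEigval {D : Type*} [Fintype D] [DecidableEq D] (M : Matrix D D ℂ) (σ : ℂ) : Prop :=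
  ∃ v : D → ℂ, v ≠ 0 ∧ M.mulVec v = σ • v

/-- Irreducibility of a nonnegative matrix. -/
def MatIrreducible {D : Type*} [Fintype D] [DecidableEq D] (P : Matrix D D ℝ) : Prop :=
  ∀ x y : D, ∃ n : ℕ, 0 < (P ^ n) x y


attribute [local instance] Matrix.linftyOpNormedRing Matrix.linftyOpNormedAlgebra

/-!
On the hyperplane `C₀ = {f | ⟨π, f⟩ = 0}` the rank-one perturbation `P^π = P + q πᵀ` acts as
`P`, and `C₀` is `P`-invariant because `π` is a left eigenvector, so
`exp (t (P^π - 1)) f = exp (t (P - 1)) f` for `f ∈ C₀`. By a Perron–Frobenius argument no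
eigenvector of `P` in `C₀` belongs to the Perron root `1 - λ`, so every eigenvalue of `P` on `C₀`
has real part at most `1 - λ - γ`. On a generalized eigenvector for `μ`, `exp (t (P - 1))` is
`exp (t (μ - 1))` times a polynomial in `t`, hence `O (exp (t (μ - 1 + δ)))`. Over `ℂ` the
generalized eigenspaces of `P` restricted to `C₀` span `C₀`, the uniform boundedness principle
makes the constant uniform in `f`, and all norms on `ℝ^D` are equivalent.
-/

theorem Seminorm.exists_norm_le_mul {E : Type*} [NormedAddCommGroup E] [NormedSpace ℝ E]
    [FiniteDimensional ℝ E] (p : Seminorm ℝ E) (hp : ∀ x, p x = 0 → x = 0) :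
    ∃ K : ℝ, ∀ x, ‖x‖ ≤ K * p x := by
  rcases subsingleton_or_nontrivial E with hE | hE
  · exact ⟨0, fun x => by simp [Subsingleton.elim x 0]⟩
  obtain ⟨x₀, hx₀, hmin⟩ := (isCompact_sphere (0 : E) 1).exists_isMinOn
    (NormedSpace.sphere_nonempty.2 zero_le_one) p.convexOn.locallyLipschitz.continuous.continuousOn
  have hpos : 0 < p x₀ := (apply_nonneg p x₀).lt_of_ne' fun h => by
    simp [hp x₀ h] at hx₀
  refine ⟨(p x₀)⁻¹, fun x => ?_⟩
  rcases eq_or_ne x 0 with rfl | hx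
  · simp
  have hnx : 0 < ‖x‖ := norm_pos_iff.2 hx
  have hsphere : ‖x‖⁻¹ • x ∈ Metric.sphere (0 : E) 1 := by
    simp [norm_smul, hnx.ne']
  have hle : p x₀ ≤ p (‖x‖⁻¹ • x) := hmin hsphere
  rw [map_smul_eq_mul, norm_inv, norm_norm, le_inv_mul_iff₀ hnx] at hle
  rw [le_inv_mul_iff₀ hpos]
  linarith

theorem Matrix.dotProduct_mulVec_eq_mul_of_transpose_mulVec_eq_smul {R n : Type*} [CommSemiring R]
    [Fintype n] {P : Matrix n n R} {r : R} {π : n → R} (hπP : Pᵀ *ᵥ π = r • π) (v : n → R) :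
    π ⬝ᵥ (P *ᵥ v) = r * (π ⬝ᵥ v) := by
  rw [dotProduct_mulVec, ← mulVec_transpose, hπP, smul_dotProduct, smul_eq_mul]

section Nonneg

variable {D : Type*} [Fintype D] {P : Matrix D D ℝ}

theorem eq_zero_of_nonneg_of_dotProduct_eq_zero {π u : D → ℝ} (hπ : ∀ x, 0 < π x) (hu : 0 ≤ u)
    (h : π ⬝ᵥ u = 0) : u = 0 := by
  funext x
  have hx := (Finset.sum_eq_zero_iff_of_nonneg fun y _ => mul_nonneg (hπ y).le (hu y)).1 h x
    (Finset.mem_univ x)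
  exact (mul_eq_zero.1 hx).resolve_left (hπ x).ne'

theorem mulVec_eq_smul_of_smul_le_mulVec {r : ℝ} {π u : D → ℝ} (hπ : ∀ x, 0 < π x)
    (hπP : Pᵀ *ᵥ π = r • π) (hu : r • u ≤ P *ᵥ u) : P *ᵥ u = r • u := by
  have h : π ⬝ᵥ (P *ᵥ u - r • u) = 0 := by
    rw [dotProduct_sub, dotProduct_mulVec_eq_mul_of_transpose_mulVec_eq_smul hπP, dotProduct_smul,
      smul_eq_mul, sub_self]
  exact sub_eq_zero.1 (eq_zero_of_nonneg_of_dotProduct_eq_zero hπ (sub_nonneg.2 hu) h)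

variable [DecidableEq D]

theorem Matrix.pow_mulVec_eq_smul {R : Type*} [CommSemiring R] {M : Matrix D D R} {r : R}
    {u : D → R} (h : M *ᵥ u = r • u) (n : ℕ) : (M ^ n) *ᵥ u = r ^ n • u := by
  induction n with
  | zero => simp
  | succ n ih => rw [pow_succ', ← mulVec_mulVec, ih, mulVec_smul, h, smul_smul, pow_succ]

theorem MatIrreducible.transpose (hirr : MatIrreducible P) : MatIrreducible Pᵀ := fun x y => by
  obtain ⟨n, hn⟩ := hirr y x
  exact ⟨n, by rwa [← transpose_pow]⟩

theorem MatIrreducible.eq_zero_of_mulVec_eq_smul (hirr : MatIrreducible P)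
    (hnn : ∀ x y, 0 ≤ P x y) {r : ℝ} {u : D → ℝ} (hu : 0 ≤ u) (hPu : P *ᵥ u = r • u) {x : D}
    (hx : u x = 0) : u = 0 := by
  funext y
  obtain ⟨n, hn⟩ := hirr x y
  have hsum : ∑ z, (P ^ n) x z * u z = 0 := by
    simpa [mulVec, dotProduct, hx] using congrFun (pow_mulVec_eq_smul hPu n) x
  have hy := (Finset.sum_eq_zero_iff_of_nonneg fun z _ =>
    mul_nonneg (pow_apply_nonneg hnn n x z) (hu z)).1 hsum y (Finset.mem_univ y)
  exact (mul_eq_zero.1 hy).resolve_left hn.ne'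

theorem MatIrreducible.pos_of_transpose_mulVec_eq_smul (hirr : MatIrreducible P)
    (hnn : ∀ x y, 0 ≤ P x y) {r : ℝ} {π : D → ℝ} (hπ : 0 ≤ π) (hπ0 : π ≠ 0)
    (hπP : Pᵀ *ᵥ π = r • π) (x : D) : 0 < π x :=
  (hπ x).lt_of_ne' fun h =>
    hπ0 (hirr.transpose.eq_zero_of_mulVec_eq_smul (fun x y => hnn y x) hπ hπP h)

/-- The negative part of `w` is a nonnegative eigenvector vanishing wherever `w ≥ 0`. -/
theorem MatIrreducible.eq_zero_of_mulVec_eq_smul_of_dotProduct_eq_zero (hirr : MatIrreducible P)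
    (hnn : ∀ x y, 0 ≤ P x y) {r : ℝ} (hr : 0 ≤ r) {π w : D → ℝ} (hπ : ∀ x, 0 < π x)
    (hπP : Pᵀ *ᵥ π = r • π) (hPw : P *ᵥ w = r • w) (hπw : π ⬝ᵥ w = 0) : w = 0 := by
  have key : ∀ w : D → ℝ, P *ᵥ w = r • w → π ⬝ᵥ w = 0 → ∀ x, 0 ≤ w x → w = 0 := by
    intro w hPw hπw x hx
    set u : D → ℝ := fun y => max (-w y) 0
    have hu : 0 ≤ u := fun y => le_max_right _ _
    have hsub : r • u ≤ P *ᵥ u := fun y => by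
      have hmono : (P *ᵥ -w) y ≤ (P *ᵥ u) y :=
        dotProduct_le_dotProduct_of_nonneg_left (fun z => le_max_left _ _) (hnn y)
      have hnonneg : 0 ≤ (P *ᵥ u) y := dotProduct_nonneg_of_nonneg (hnn y) hu
      rw [mulVec_neg, hPw] at hmono
      simp only [u, Pi.smul_apply, smul_eq_mul, Pi.neg_apply] at hmono ⊢
      rw [mul_max_of_nonneg _ _ hr, mul_zero, mul_neg]
      exact max_le hmono hnonneg
    have hu0 : u = 0 := hirr.eq_zero_of_mulVec_eq_smul hnn hu
      (mulVec_eq_smul_of_smul_le_mulVec hπ hπP hsub) (x := x) (by simp [u, hx])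
    refine eq_zero_of_nonneg_of_dotProduct_eq_zero hπ (fun y => ?_) hπw
    simpa [u] using congrFun hu0 y
  by_contra hw
  obtain ⟨x, hx⟩ := Function.ne_iff.1 hw
  rcases le_total 0 (w x) with h | h
  · exact hw (key w hPw hπw x h)
  · exact hw (neg_eq_zero.1 (key (-w) (by rw [mulVec_neg, hPw, smul_neg])
      (by rw [dotProduct_neg, hπw, neg_zero]) x (by simpa using h)))

theorem MatIrreducible.re_le_of_map_ofReal_mulVec_eq_smul (hirr : MatIrreducible P)
    (hnn : ∀ x y, 0 ≤ P x y) {r ρ : ℝ} (hr : 0 ≤ r) {π : D → ℝ} (hπ : ∀ x, 0 < π x)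
    (hπP : Pᵀ *ᵥ π = r • π)
    (hgap : ∀ σ : ℂ, IsEigval (P.map Complex.ofReal) σ → σ ≠ (r : ℂ) → σ.re ≤ ρ)
    {σ : ℂ} {v : D → ℂ} (hv0 : v ≠ 0) (hPv : P.map Complex.ofReal *ᵥ v = σ • v)
    (hπv : (Complex.ofReal ∘ π) ⬝ᵥ v = 0) : σ.re ≤ ρ := by
  refine hgap σ ⟨v, hv0, hPv⟩ fun hσ => hv0 ?_
  subst hσ
  have hPre : P *ᵥ (fun x => (v x).re) = r • fun x => (v x).re := funext fun x => by
    simpa [mulVec, dotProduct, Complex.re_sum] using congrArg Complex.re (congrFun hPv x)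
  have hPim : P *ᵥ (fun x => (v x).im) = r • fun x => (v x).im := funext fun x => by
    simpa [mulVec, dotProduct, Complex.im_sum] using congrArg Complex.im (congrFun hPv x)
  have hre := hirr.eq_zero_of_mulVec_eq_smul_of_dotProduct_eq_zero hnn hr hπ hπP hPre
    (by simpa [dotProduct, Complex.re_sum] using congrArg Complex.re hπv)
  have him := hirr.eq_zero_of_mulVec_eq_smul_of_dotProduct_eq_zero hnn hr hπ hπP hPim
    (by simpa [dotProduct, Complex.im_sum] using congrArg Complex.im hπv)
  exact funext fun x => Complex.ext (congrFun hre x) (congrFun him x)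

end Nonneg

section Exp

variable {𝕂 : Type*} [RCLike 𝕂] {n : Type*} [Fintype n] [DecidableEq n]

theorem Matrix.hasSum_exp_mulVec (M : Matrix n n 𝕂) (v : n → 𝕂) :
    HasSum (fun k => (k.factorial⁻¹ : 𝕂) • (M ^ k *ᵥ v)) (NormedSpace.exp M *ᵥ v) := by
  have h : HasSum (fun k => ((k.factorial⁻¹ : 𝕂) • M ^ k) *ᵥ v) (NormedSpace.exp M *ᵥ v) :=
    (NormedSpace.exp_series_hasSum_exp' (𝕂 := 𝕂) M).map
      (mulVec.addMonoidHomLeft v) (continuous_id.matrix_mulVec continuous_const)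
  simpa only [smul_mulVec] using h

theorem Matrix.exp_mulVec_eq_of_mulVec_eq_on {M N : Matrix n n 𝕂} {V : Submodule 𝕂 (n → 𝕂)}
    (hN : ∀ v ∈ V, N *ᵥ v ∈ V) (hMN : ∀ v ∈ V, M *ᵥ v = N *ᵥ v) {v : n → 𝕂} (hv : v ∈ V) :
    NormedSpace.exp M *ᵥ v = NormedSpace.exp N *ᵥ v := by
  have hpow : ∀ k, ∀ v ∈ V, M ^ k *ᵥ v = N ^ k *ᵥ v := by
    intro k
    induction k with
    | zero => simp
    | succ k ih =>
      intro v hv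
      rw [pow_succ, pow_succ, ← mulVec_mulVec, ← mulVec_mulVec, hMN v hv, ih _ (hN v hv)]
  exact (hasSum_exp_mulVec M v).unique (by simpa only [hpow _ v hv] using hasSum_exp_mulVec N v)

theorem Matrix.exp_smul_mulVec_eq_sum_of_pow_mulVec_eq_zero {N : Matrix n n 𝕂} {k : ℕ}
    {v : n → 𝕂} (hv : N ^ k *ᵥ v = 0) (c : 𝕂) :
    NormedSpace.exp (c • N) *ᵥ v =
      ∑ j ∈ Finset.range k, (c ^ j / j.factorial) • (N ^ j *ᵥ v) := by
  refine ((hasSum_exp_mulVec (c • N) v).unique (hasSum_sum_of_ne_finset_zero fun j hj => ?_)).trans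
    (Finset.sum_congr rfl fun j _ => ?_)
  · rw [Finset.mem_range, not_lt] at hj
    rw [smul_pow, smul_mulVec, ← Nat.sub_add_cancel hj, pow_add N, ← mulVec_mulVec, hv,
      mulVec_zero, smul_zero, smul_zero]
  · rw [smul_pow, smul_mulVec, smul_smul, div_eq_inv_mul]

theorem Matrix.exp_smul_add_smul_one (N : Matrix n n 𝕂) (c μ : 𝕂) :
    NormedSpace.exp (c • (N + μ • 1)) = NormedSpace.exp (c * μ) • NormedSpace.exp (c • N) := by
  have hcomm : Commute (c • N) ((c * μ) • (1 : Matrix n n 𝕂)) := (Commute.one_right _).smul_right _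
  have hscalar : NormedSpace.exp (algebraMap 𝕂 (Matrix n n 𝕂) (c * μ)) =
      algebraMap 𝕂 _ (NormedSpace.exp (c * μ)) := (NormedSpace.algebraMap_exp_comm _).symm
  rw [smul_add, smul_smul, exp_add_of_commute _ _ hcomm, ← Algebra.algebraMap_eq_smul_one,
    hscalar, ← Algebra.commutes, ← Algebra.smul_def]

theorem Matrix.exp_smul_add_vecMulVec_sub_one_mulVec {P : Matrix n n 𝕂} {r : 𝕂} {π : n → 𝕂}
    (hπP : Pᵀ *ᵥ π = r • π) (q : n → 𝕂) {f : n → 𝕂} (hf : π ⬝ᵥ f = 0) (t : 𝕂) :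
    NormedSpace.exp (t • (P + vecMulVec q π - 1)) *ᵥ f = NormedSpace.exp (t • (P - 1)) *ᵥ f := by
  have hmem : ∀ v, v ∈ LinearMap.ker (dotProductBilin 𝕂 𝕂 π) ↔ π ⬝ᵥ v = 0 := by simp
  refine exp_mulVec_eq_of_mulVec_eq_on (V := LinearMap.ker (dotProductBilin 𝕂 𝕂 π))
    (fun v hv => ?_) (fun v hv => ?_) ((hmem f).2 hf)
  · rw [hmem] at hv ⊢
    rw [smul_mulVec, sub_mulVec, one_mulVec, dotProduct_smul, dotProduct_sub,
      dotProduct_mulVec_eq_mul_of_transpose_mulVec_eq_smul hπP, hv, mul_zero, sub_zero, smul_zero]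
  · rw [hmem] at hv
    rw [smul_mulVec, smul_mulVec, sub_mulVec, sub_mulVec, add_mulVec, vecMulVec_mulVec, hv,
      MulOpposite.op_zero, zero_smul, add_zero]

end Exp

section OfReal

variable {n : Type*} [Fintype n]

theorem Matrix.ofReal_comp_mulVec (M : Matrix n n ℝ) (v : n → ℝ) :
    Complex.ofReal ∘ (M *ᵥ v) = M.map Complex.ofReal *ᵥ (Complex.ofReal ∘ v) :=
  funext (RingHom.map_mulVec Complex.ofRealHom M v)

theorem Matrix.ofReal_comp_exp_mulVec [DecidableEq n] (M : Matrix n n ℝ) (v : n → ℝ) :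
    Complex.ofReal ∘ (NormedSpace.exp M *ᵥ v) =
      NormedSpace.exp (M.map Complex.ofReal) *ᵥ (Complex.ofReal ∘ v) := by
  have h : (NormedSpace.exp M).map Complex.ofReal = NormedSpace.exp (M.map Complex.ofReal) :=
    NormedSpace.map_exp (Complex.ofRealHom.mapMatrix (m := n))
      (continuous_id.matrix_map Complex.continuous_ofReal) M
  rw [ofReal_comp_mulVec, h]

theorem norm_ofReal_comp (v : n → ℝ) : ‖Complex.ofReal ∘ v‖ = ‖v‖ := by
  simp [Pi.norm_def, Function.comp_def]

end OfReal

theorem Real.pow_div_factorial_le_inv_pow_mul_exp {t δ : ℝ} (ht : 0 ≤ t) (hδ : 0 < δ) (j : ℕ) :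
    t ^ j / j.factorial ≤ (δ ^ j)⁻¹ * Real.exp (t * δ) := by
  have h := Real.pow_div_factorial_le_exp _ (mul_nonneg ht hδ.le) j
  rw [mul_pow, mul_comm (t ^ j), mul_div_assoc] at h
  rwa [le_inv_mul_iff₀ (pow_pos hδ j)]

theorem Submodule.exists_hasEigenvector_of_inf_maxGenEigenspace_ne_bot {R M : Type*}
    [CommRing R] [AddCommGroup M] [Module R M] {f : Module.End R M} {p : Submodule R M}
    (hfp : ∀ x ∈ p, f x ∈ p) {μ : R} (h : p ⊓ f.maxGenEigenspace μ ≠ ⊥) :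
    ∃ x ∈ p, f.HasEigenvector μ x := by
  rw [Submodule.inf_genEigenspace f p hfp] at h
  have hμ : Module.End.HasEigenvalue (f.restrict hfp) μ :=
    (Module.End.hasUnifEigenvalue_iff_hasUnifEigenvalue_one ENat.top_pos).1
      fun h0 => h (by rw [h0, Submodule.map_bot])
  obtain ⟨x, hx, hx0⟩ := hμ.exists_hasEigenvector
  exact ⟨x, x.2, Module.End.eigenspace_restrict_le_eigenspace f hfp μ ⟨x, hx, rfl⟩,
    by simpa using hx0⟩

section Growth

variable {n : Type*} [Fintype n] [DecidableEq n]

def Matrix.expGrowthSubmodule (M : Matrix n n ℂ) (κ : ℝ) : Submodule ℂ (n → ℂ) where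
  carrier := {v | ∃ C, ∀ t : ℝ, 0 ≤ t →
    ‖NormedSpace.exp ((t : ℂ) • M) *ᵥ v‖ ≤ C * Real.exp (t * κ)}
  zero_mem' := ⟨0, fun t _ => by simp⟩
  add_mem' := by
    rintro v w ⟨C, hC⟩ ⟨C', hC'⟩
    refine ⟨C + C', fun t ht => ?_⟩
    rw [mulVec_add, add_mul]
    exact (norm_add_le _ _).trans (add_le_add (hC t ht) (hC' t ht))
  smul_mem' := by
    rintro c v ⟨C, hC⟩
    refine ⟨‖c‖ * C, fun t ht => ?_⟩
    rw [mulVec_smul, norm_smul, mul_assoc]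
    exact mul_le_mul_of_nonneg_left (hC t ht) (norm_nonneg c)

theorem Matrix.expGrowthSubmodule_mono (M : Matrix n n ℂ) {κ κ' : ℝ} (h : κ ≤ κ') :
    M.expGrowthSubmodule κ ≤ M.expGrowthSubmodule κ' := by
  rintro v ⟨C, hC⟩
  have hC0 : 0 ≤ C := by simpa using (norm_nonneg _).trans (hC 0 le_rfl)
  exact ⟨C, fun t ht => (hC t ht).trans
    (mul_le_mul_of_nonneg_left (Real.exp_le_exp.2 (mul_le_mul_of_nonneg_left h ht)) hC0)⟩

theorem Matrix.mem_expGrowthSubmodule_of_mem_maxGenEigenspace {M : Matrix n n ℂ} {μ : ℂ}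
    {v : n → ℂ} (hv : v ∈ Module.End.maxGenEigenspace (toLin' M) μ) {δ : ℝ} (hδ : 0 < δ) :
    v ∈ M.expGrowthSubmodule (μ.re + δ) := by
  obtain ⟨k, hk⟩ := (Module.End.mem_maxGenEigenspace _ _ _).1 hv
  set N := M - μ • 1
  have hNk : N ^ k *ᵥ v = 0 := by
    have hN : toLin' N = toLin' M - μ • 1 := by simp [N, Module.End.one_eq_id]
    rwa [← toLin'_apply, toLin'_pow, hN]
  refine ⟨∑ j ∈ Finset.range k, (δ ^ j)⁻¹ * ‖N ^ j *ᵥ v‖, fun t ht => ?_⟩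
  rw [show M = N + μ • 1 from (sub_add_cancel _ _).symm, exp_smul_add_smul_one, smul_mulVec,
    exp_smul_mulVec_eq_sum_of_pow_mulVec_eq_zero hNk, norm_smul, ← Complex.exp_eq_exp_ℂ,
    Complex.norm_exp]
  have hre : ((t : ℂ) * μ).re = t * μ.re := by simp
  calc Real.exp ((t : ℂ) * μ).re *
        ‖∑ j ∈ Finset.range k, ((t : ℂ) ^ j / j.factorial) • (N ^ j *ᵥ v)‖
      ≤ Real.exp (t * μ.re) * ∑ j ∈ Finset.range k, t ^ j / j.factorial * ‖N ^ j *ᵥ v‖ := by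
        rw [hre]
        refine mul_le_mul_of_nonneg_left ((norm_sum_le _ _).trans (Finset.sum_le_sum fun j _ => ?_))
          (Real.exp_nonneg _)
        rw [norm_smul, norm_div, norm_pow, Complex.norm_real, Real.norm_of_nonneg ht,
          Complex.norm_natCast]
    _ ≤ Real.exp (t * μ.re) * ∑ j ∈ Finset.range k,
          (δ ^ j)⁻¹ * Real.exp (t * δ) * ‖N ^ j *ᵥ v‖ := by
        gcongr with j
        exact Real.pow_div_factorial_le_inv_pow_mul_exp ht hδ j
    _ = (∑ j ∈ Finset.range k, (δ ^ j)⁻¹ * ‖N ^ j *ᵥ v‖) * Real.exp (t * (μ.re + δ)) := by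
        rw [mul_add, Real.exp_add, Finset.sum_mul, Finset.mul_sum]
        exact Finset.sum_congr rfl fun j _ => by ring

theorem Matrix.le_expGrowthSubmodule_of_forall_eigenvalue_re_le {M : Matrix n n ℂ}
    {V : Submodule ℂ (n → ℂ)} (hV : ∀ v ∈ V, M *ᵥ v ∈ V) {ρ : ℝ}
    (hρ : ∀ μ : ℂ, ∀ v ∈ V, v ≠ 0 → M *ᵥ v = μ • v → μ.re ≤ ρ) {δ : ℝ} (hδ : 0 < δ) :
    V ≤ M.expGrowthSubmodule (ρ + δ) := by
  have hV' : ∀ v ∈ V, toLin' M v ∈ V := hV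
  rw [Submodule.eq_iSup_inf_genEigenspace ⊤ hV' (Module.End.iSup_maxGenEigenspace_eq_top _)]
  refine iSup_le fun μ => ?_
  by_cases hμ : μ.re ≤ ρ
  · exact inf_le_right.trans fun v hv => expGrowthSubmodule_mono M (by linarith)
      (mem_expGrowthSubmodule_of_mem_maxGenEigenspace hv hδ)
  · suffices h : V ⊓ Module.End.maxGenEigenspace (toLin' M) μ = ⊥ by
      rw [h]
      exact bot_le
    by_contra h
    obtain ⟨x, hxV, hx⟩ := Submodule.exists_hasEigenvector_of_inf_maxGenEigenspace_ne_bot hV' h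
    exact hμ (hρ μ x hxV hx.2 (Module.End.mem_eigenspace_iff.1 hx.1))

theorem Matrix.exists_norm_exp_smul_mulVec_le_of_le_expGrowthSubmodule {M : Matrix n n ℂ}
    {V : Submodule ℂ (n → ℂ)} {κ : ℝ} (hV : V ≤ M.expGrowthSubmodule κ) :
    ∃ C, 0 ≤ C ∧ ∀ v ∈ V, ∀ t : ℝ, 0 ≤ t →
      ‖NormedSpace.exp ((t : ℂ) • M) *ᵥ v‖ ≤ C * Real.exp (t * κ) * ‖v‖ := by
  let T : Set.Ici (0 : ℝ) → V →L[ℂ] (n → ℂ) := fun t => LinearMap.toContinuousLinearMap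
    ((Real.exp (-(t * κ)) : ℂ) • ((NormedSpace.exp ((t : ℂ) • M)).mulVecLin ∘ₗ V.subtype))
  have hT : ∀ t v, ‖T t v‖ = Real.exp (-(t * κ)) * ‖NormedSpace.exp ((t : ℂ) • M) *ᵥ v‖ :=
    fun t v => by simp [T, norm_smul, -Complex.ofReal_exp]
  obtain ⟨C, hC⟩ := banach_steinhaus (g := T) fun v => by
    obtain ⟨C, hC⟩ := hV v.2
    refine ⟨C, fun t => ?_⟩
    rw [hT, Real.exp_neg, inv_mul_le_iff₀ (Real.exp_pos _), mul_comm]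
    exact hC t t.2
  refine ⟨C, (norm_nonneg _).trans (hC ⟨0, Set.mem_Ici.2 le_rfl⟩), fun v hv t ht => ?_⟩
  have hle := ((T ⟨t, ht⟩).le_opNorm ⟨v, hv⟩).trans
    (mul_le_mul_of_nonneg_right (hC _) (norm_nonneg _))
  rw [hT, Real.exp_neg, inv_mul_le_iff₀ (Real.exp_pos _)] at hle
  calc _ ≤ Real.exp (t * κ) * (C * ‖v‖) := hle
    _ = C * Real.exp (t * κ) * ‖v‖ := by ring

end Growth

theorem MatIrreducible.exists_norm_exp_mulVec_le {D : Type*} [Fintype D] [DecidableEq D]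
    {P : Matrix D D ℝ} (hirr : MatIrreducible P) (hnn : ∀ x y, 0 ≤ P x y) {r ρ : ℝ} (hr : 0 ≤ r)
    {π : D → ℝ} (hπ : ∀ x, 0 < π x) (hπP : Pᵀ *ᵥ π = r • π)
    (hgap : ∀ σ : ℂ, IsEigval (P.map Complex.ofReal) σ → σ ≠ (r : ℂ) → σ.re ≤ ρ)
    {δ : ℝ} (hδ : 0 < δ) :
    ∃ C, 0 ≤ C ∧ ∀ f : D → ℝ, π ⬝ᵥ f = 0 → ∀ t : ℝ, 0 ≤ t →
      ‖NormedSpace.exp (t • (P - 1)) *ᵥ f‖ ≤ C * Real.exp (t * (ρ - 1 + δ)) * ‖f‖ := by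
  set Pc := P.map Complex.ofReal
  set V := LinearMap.ker (dotProductBilin ℂ ℂ (Complex.ofReal ∘ π))
  have hmem : ∀ v, v ∈ V ↔ (Complex.ofReal ∘ π) ⬝ᵥ v = 0 := by simp [V]
  have hπPc : Pcᵀ *ᵥ (Complex.ofReal ∘ π) = (r : ℂ) • (Complex.ofReal ∘ π) := by
    rw [← transpose_map, ← ofReal_comp_mulVec, hπP]
    funext x
    simp
  have hV : ∀ v ∈ V, (Pc - 1) *ᵥ v ∈ V := fun v hv => by
    rw [hmem] at hv ⊢
    rw [sub_mulVec, one_mulVec, dotProduct_sub,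
      dotProduct_mulVec_eq_mul_of_transpose_mulVec_eq_smul hπPc, hv, mul_zero, sub_zero]
  have hspec : ∀ μ : ℂ, ∀ v ∈ V, v ≠ 0 → (Pc - 1) *ᵥ v = μ • v → μ.re ≤ ρ - 1 := by
    intro μ v hvV hv0 hμ
    rw [sub_mulVec, one_mulVec, sub_eq_iff_eq_add] at hμ
    have hle := hirr.re_le_of_map_ofReal_mulVec_eq_smul hnn hr hπ hπP hgap (σ := μ + 1) hv0
      (by rw [hμ, add_smul, one_smul]) ((hmem v).1 hvV)
    rw [Complex.add_re, Complex.one_re] at hle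
    linarith
  obtain ⟨C, hC0, hC⟩ := exists_norm_exp_smul_mulVec_le_of_le_expGrowthSubmodule
    (le_expGrowthSubmodule_of_forall_eigenvalue_re_le hV hspec hδ)
  refine ⟨C, hC0, fun f hf t ht => ?_⟩
  have hfV : Complex.ofReal ∘ f ∈ V :=
    (hmem _).2 (by simpa [dotProduct] using congrArg Complex.ofReal hf)
  have hmap : (t • (P - 1)).map Complex.ofReal = (t : ℂ) • (Pc - 1) := by
    ext i j
    by_cases h : i = j <;> simp [Pc, h, one_apply]
  rw [← norm_ofReal_comp, ofReal_comp_exp_mulVec, hmap, ← norm_ofReal_comp f]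
  exact hC _ hfV t ht

theorem pi_return_semigroup_decay_on_C0_general
    {D : Type*} [Fintype D] [DecidableEq D]
    (P : Matrix D D ℝ)
    (hnn : ∀ x y, 0 ≤ P x y)
    (hirr : MatIrreducible P)
    (lam : ℝ)
    (hsr_attained : ∃ σ : ℂ, IsEigval (P.map Complex.ofReal) σ ∧ ‖σ‖ = 1 - lam)
    (π : D → ℝ)
    (hπnn : ∀ x, 0 ≤ π x) (hπsum : ∑ x, π x = 1)
    (hπeig : Pᵀ.mulVec π = (1 - lam) • π)
    (γ : ℝ)
    (hgap_ub : ∀ σ : ℂ, IsEigval (P.map Complex.ofReal) σ → σ ≠ ((1 - lam : ℝ) : ℂ) →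
      σ.re ≤ 1 - lam - γ)
    (δ : ℝ) (hδ : 0 < δ)
    (nrm : Seminorm ℝ (D → ℝ)) (hnrm : ∀ g : D → ℝ, nrm g = 0 → g = 0) :
    ∃ C : ℝ, ∀ f : D → ℝ, (∑ x, π x * f x = 0) → ∀ t : ℝ, 0 ≤ t → ∀ x : D,
      |(NormedSpace.exp
          (t • ((Matrix.of fun x y => P x y + (1 - ∑ z, P x z) * π y) - 1))).mulVec f x|
        ≤ C * Real.exp (-t * (lam + γ - δ)) * nrm f := by
  obtain ⟨σ, -, hσ⟩ := hsr_attained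
  have hπpos := hirr.pos_of_transpose_mulVec_eq_smul hnn hπnn
    (fun h => by simp [h] at hπsum) hπeig
  obtain ⟨C, hC0, hC⟩ := hirr.exists_norm_exp_mulVec_le hnn (hσ ▸ norm_nonneg σ) hπpos hπeig
    hgap_ub hδ
  obtain ⟨K, hK⟩ := nrm.exists_norm_le_mul hnrm
  have hQ : (Matrix.of fun x y => P x y + (1 - ∑ z, P x z) * π y) =
      P + vecMulVec (fun x => 1 - ∑ z, P x z) π := by
    ext
    simp [vecMulVec_apply]
  refine ⟨C * K, fun f hf t ht x => ?_⟩
  rw [hQ, exp_smul_add_vecMulVec_sub_one_mulVec hπeig _ hf]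
  calc _ = ‖(NormedSpace.exp (t • (P - 1)) *ᵥ f) x‖ := (Real.norm_eq_abs _).symm
    _ ≤ ‖NormedSpace.exp (t • (P - 1)) *ᵥ f‖ := norm_le_pi_norm _ x
    _ ≤ C * Real.exp (t * (1 - lam - γ - 1 + δ)) * ‖f‖ := hC f hf t ht
    _ ≤ C * Real.exp (t * (1 - lam - γ - 1 + δ)) * (K * nrm f) := by gcongr; exact hK f
    _ = C * K * Real.exp (-t * (lam + γ - δ)) * nrm f := by ring_nf

theorem pi_return_semigroup_decay_on_C0
    {D : Type*} [Fintype D] [DecidableEq D] [Nonempty D]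
    (P : Matrix D D ℝ)
    (hnn : ∀ x y, 0 ≤ P x y)
    (hrow : ∀ x, ∑ y, P x y ≤ 1)
    (hirr : MatIrreducible P)
    (lam : ℝ)
    (hsr_ub : ∀ σ : ℂ, IsEigval (P.map Complex.ofReal) σ → ‖σ‖ ≤ 1 - lam)
    (hsr_attained : ∃ σ : ℂ, IsEigval (P.map Complex.ofReal) σ ∧ ‖σ‖ = 1 - lam)
    (π : D → ℝ)
    (hπnn : ∀ x, 0 ≤ π x) (hπsum : ∑ x, π x = 1)
    (hπeig : Pᵀ.mulVec π = (1 - lam) • π)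
    (γ : ℝ) (hγpos : 0 < γ)
    (hgap_ub : ∀ σ : ℂ, IsEigval (P.map Complex.ofReal) σ → σ ≠ ((1 - lam : ℝ) : ℂ) →
      σ.re ≤ 1 - lam - γ)
    (hgap_attained : ∃ σ : ℂ, IsEigval (P.map Complex.ofReal) σ ∧ σ ≠ ((1 - lam : ℝ) : ℂ) ∧
      σ.re = 1 - lam - γ)
    (δ : ℝ) (hδ : 0 < δ)
    (nrm : Seminorm ℝ (D → ℝ)) (hnrm : ∀ g : D → ℝ, nrm g = 0 → g = 0) :
    ∃ C : ℝ, ∀ f : D → ℝ, (∑ x, π x * f x = 0) → ∀ t : ℝ, 0 ≤ t → ∀ x : D,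
      |(NormedSpace.exp
          (t • ((Matrix.of fun x y => P x y + (1 - ∑ z, P x z) * π y) - 1))).mulVec f x|
        ≤ C * Real.exp (-t * (lam + γ - δ)) * nrm f :=
  pi_return_semigroup_decay_on_C0_general P hnn hirr lam hsr_attained π hπnn hπsum hπeig γ hgap_ub δ
    hδ nrm hnrm
end

section
/- For any f : D → ℝ, x ∈ D, and t ≥ 0, the π-return semigroup satisfies exp(t(P^π_D − I)) f (x) = exp(t(P_D − I)) (f − ⟨π,f⟩·1)(x) + ⟨π,f⟩, where ⟨π,f⟩ = ∑_x π(x) f(x). -/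
open Matrix BigOperators

/-!
Split `f = (f - ⟨π, f⟩) + ⟨π, f⟩`. The rank-one perturbation `P^π_D = P_D + q πᵀ` agrees with
`P_D` on the hyperplane `{v | π ⬝ᵥ v = 0}`, and `P_D` maps that hyperplane into itself because `π`
is a left eigenvector; so both generators have the same powers on `f - ⟨π, f⟩`, hence the same
exponential. Since `∑ π = 1`, `P^π_D` is stochastic, so `P^π_D - I` kills constants and its
exponential fixes `⟨π, f⟩`.
-/

attribute [local instance] Matrix.linftyOpNormedRing Matrix.linftyOpNormedAlgebra

namespace Matrix

variable {D : Type*} [Fintype D] [DecidableEq D]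

theorem hasSum_exp_mulVec_s9 (M : Matrix D D ℝ) (v : D → ℝ) :
    HasSum (fun n => (n.factorial⁻¹ : ℝ) • (M ^ n *ᵥ v)) (NormedSpace.exp M *ᵥ v) := by
  have h := (NormedSpace.exp_series_hasSum_exp' (𝕂 := ℝ) M).map (mulVec.addMonoidHomLeft v)
    (continuous_id.matrix_mulVec continuous_const)
  convert h using 2 with n
  · simp [mulVec.addMonoidHomLeft, smul_mulVec]
  · rfl

theorem exp_mulVec_eq_of_pow_mulVec_eq {A B : Matrix D D ℝ} {v : D → ℝ}
    (h : ∀ n : ℕ, A ^ n *ᵥ v = B ^ n *ᵥ v) :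
    NormedSpace.exp A *ᵥ v = NormedSpace.exp B *ᵥ v :=
  (hasSum_exp_mulVec_s9 A v).unique (by simpa only [h] using hasSum_exp_mulVec_s9 B v)

theorem exp_mulVec_eq_of_eqOn_of_mapsTo {A B : Matrix D D ℝ} {S : Set (D → ℝ)}
    (hB : ∀ w ∈ S, B *ᵥ w ∈ S) (hAB : ∀ w ∈ S, A *ᵥ w = B *ᵥ w) {v : D → ℝ} (hv : v ∈ S) :
    NormedSpace.exp A *ᵥ v = NormedSpace.exp B *ᵥ v := by
  have key : ∀ n : ℕ, A ^ n *ᵥ v = B ^ n *ᵥ v ∧ B ^ n *ᵥ v ∈ S := by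
    intro n
    induction n with
    | zero => simpa using hv
    | succ n ih =>
      obtain ⟨heq, hmem⟩ := ih
      rw [pow_succ', pow_succ', ← mulVec_mulVec, ← mulVec_mulVec, heq, hAB _ hmem]
      exact ⟨rfl, hB _ hmem⟩
  exact exp_mulVec_eq_of_pow_mulVec_eq fun n => (key n).1

theorem exp_mulVec_of_mulVec_eq_zero {A : Matrix D D ℝ} {v : D → ℝ} (hv : A *ᵥ v = 0) :
    NormedSpace.exp A *ᵥ v = v := by
  have h := exp_mulVec_eq_of_eqOn_of_mapsTo (B := (0 : Matrix D D ℝ)) (S := {w | A *ᵥ w = 0})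
    (by simp) (fun w hw => by simpa using hw) hv
  rwa [NormedSpace.exp_zero, one_mulVec] at h

theorem smul_sub_one_mulVec (t : ℝ) (A : Matrix D D ℝ) (v : D → ℝ) :
    (t • (A - 1)) *ᵥ v = t • (A *ᵥ v - v) := by
  rw [smul_mulVec, sub_mulVec, one_mulVec]

end Matrix

open Matrix

section PiReturn

variable {D : Type*} [Fintype D]

def piReturn (P : Matrix D D ℝ) (π : D → ℝ) : Matrix D D ℝ :=
  of fun x y => P x y + (1 - ∑ z, P x z) * π y

theorem piReturn_mulVec (P : Matrix D D ℝ) (π v : D → ℝ) :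
    piReturn P π *ᵥ v = P *ᵥ v + (π ⬝ᵥ v) • (1 - P *ᵥ 1) := by
  ext x
  simp only [piReturn, mulVec, dotProduct, of_apply, Pi.add_apply, Pi.smul_apply, Pi.sub_apply,
    Pi.one_apply, mul_one, smul_eq_mul, add_mul, Finset.sum_add_distrib, Finset.sum_mul]
  congr 1
  exact Finset.sum_congr rfl fun y _ => by ring

theorem piReturn_mulVec_of_dotProduct_eq_zero (P : Matrix D D ℝ) {π v : D → ℝ}
    (hv : π ⬝ᵥ v = 0) : piReturn P π *ᵥ v = P *ᵥ v := by
  simp [piReturn_mulVec, hv]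

theorem piReturn_mulVec_const (P : Matrix D D ℝ) {π : D → ℝ} (hπ : ∑ x, π x = 1) (c : ℝ) :
    piReturn P π *ᵥ (fun _ => c) = fun _ => c := by
  have hconst : (fun _ : D => c) = c • 1 := by ext; simp
  have hπc : π ⬝ᵥ c • 1 = c := by rw [dotProduct_smul, dotProduct_one, hπ, smul_eq_mul, mul_one]
  rw [hconst, piReturn_mulVec, hπc, mulVec_smul, ← smul_add, add_sub_cancel]

theorem dotProduct_mulVec_eq_zero_of_left_eigenvector {P : Matrix D D ℝ} {π v : D → ℝ} {μ : ℝ}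
    (hπ : Pᵀ *ᵥ π = μ • π) (hv : π ⬝ᵥ v = 0) : π ⬝ᵥ (P *ᵥ v) = 0 := by
  rw [dotProduct_mulVec, ← mulVec_transpose, hπ, smul_dotProduct, hv, smul_zero]

theorem dotProduct_sub_const_eq_zero {π : D → ℝ} (hπ : ∑ x, π x = 1) (f : D → ℝ) :
    π ⬝ᵥ (f - fun _ => π ⬝ᵥ f) = 0 := by
  rw [dotProduct_sub, sub_eq_zero]
  simp only [dotProduct, ← Finset.sum_mul, hπ, one_mul]

end PiReturn

theorem pi_return_semigroup_vs_killed_semigroup_general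
    {D : Type*} [Fintype D] [DecidableEq D]
    (P : Matrix D D ℝ)
    (lam : ℝ)
    (π : D → ℝ)
    (hπsum : ∑ x, π x = 1)
    (hπeig : Pᵀ.mulVec π = (1 - lam) • π) :
    ∀ (f : D → ℝ) (x : D) (t : ℝ), 0 ≤ t →
      (NormedSpace.exp
          (t • ((Matrix.of fun x y => P x y + (1 - ∑ z, P x z) * π y) - 1))).mulVec f x
        = (NormedSpace.exp (t • (P - 1))).mulVec
            (f - fun _ => ∑ y, π y * f y) x + ∑ y, π y * f y := by
  intro f x t _
  change (NormedSpace.exp (t • (piReturn P π - 1)) *ᵥ f) x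
    = (NormedSpace.exp (t • (P - 1)) *ᵥ (f - fun _ => π ⬝ᵥ f)) x + π ⬝ᵥ f
  have hinv : ∀ w, π ⬝ᵥ w = 0 → π ⬝ᵥ ((t • (P - 1)) *ᵥ w) = 0 := fun w hw => by
    rw [smul_sub_one_mulVec, dotProduct_smul, dotProduct_sub,
      dotProduct_mulVec_eq_zero_of_left_eigenvector hπeig hw, hw, sub_zero, smul_zero]
  have hagree : ∀ w, π ⬝ᵥ w = 0 → (t • (piReturn P π - 1)) *ᵥ w = (t • (P - 1)) *ᵥ w :=
    fun w hw => by rw [smul_sub_one_mulVec, smul_sub_one_mulVec,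
      piReturn_mulVec_of_dotProduct_eq_zero P hw]
  have hfluct := exp_mulVec_eq_of_eqOn_of_mapsTo (S := {w | π ⬝ᵥ w = 0}) hinv hagree
    (dotProduct_sub_const_eq_zero hπsum f)
  have hmean : NormedSpace.exp (t • (piReturn P π - 1)) *ᵥ (fun _ => π ⬝ᵥ f) = fun _ => π ⬝ᵥ f :=
    exp_mulVec_of_mulVec_eq_zero (by rw [smul_sub_one_mulVec, piReturn_mulVec_const P hπsum,
      sub_self, smul_zero])
  conv_lhs => rw [← sub_add_cancel f (fun _ => π ⬝ᵥ f), mulVec_add, hfluct, hmean]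
  rfl

theorem pi_return_semigroup_vs_killed_semigroup
    {D : Type*} [Fintype D] [DecidableEq D] [Nonempty D]
    (P : Matrix D D ℝ)
    (hnn : ∀ x y, 0 ≤ P x y)
    (hrow : ∀ x, ∑ y, P x y ≤ 1)
    (hirr : MatIrreducible P)
    (lam : ℝ)
    (hsr_ub : ∀ σ : ℂ, IsEigval (P.map Complex.ofReal) σ → ‖σ‖ ≤ 1 - lam)
    (hsr_attained : ∃ σ : ℂ, IsEigval (P.map Complex.ofReal) σ ∧ ‖σ‖ = 1 - lam)
    (π : D → ℝ)
    (hπnn : ∀ x, 0 ≤ π x) (hπsum : ∑ x, π x = 1)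
    (hπeig : Pᵀ.mulVec π = (1 - lam) • π) :
    ∀ (f : D → ℝ) (x : D) (t : ℝ), 0 ≤ t →
      (NormedSpace.exp
          (t • ((Matrix.of fun x y => P x y + (1 - ∑ z, P x z) * π y) - 1))).mulVec f x
        = (NormedSpace.exp (t • (P - 1))).mulVec
            (f - fun _ => ∑ y, π y * f y) x + ∑ y, π y * f y :=
  pi_return_semigroup_vs_killed_semigroup_general P lam π hπsum hπeig
end
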